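/- Let a group G act by isometries on a proper geodesic metric space (X,d) with basepoint o, and let h1, h2, h3 ∈ G be three pairwise weakly independent contracting elements. Then for every contracting element g ∈ G there exists h ∈ {h1, h2, h3} such that g and h are weakly independent. -/
import Mathlib


open Metric

/-- A geodesic parametrisation from `x` to `y`, with image `s`: an isometric embedding of
the interval `[0, dist x y]` sending the endpoints to `x` and `y`. -/
def IsGeodesicFromTo {X : Type*} [MetricSpace X] (s : Set X) (x y : X) : Prop :=
  ∃ γ : ℝ → X,
    (∀ u ∈ Set.Icc (0 : ℝ) (dist x y), ∀ v ∈ Set.Icc (0 : ℝ) (dist x y),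
      dist (γ u) (γ v) = |u - v|) ∧
    γ 0 = x ∧ γ (dist x y) = y ∧ s = γ '' Set.Icc (0 : ℝ) (dist x y)

/-- A geodesic segment: the image of an isometric embedding of a compact real interval. -/
def IsGeodesicSegment {X : Type*} [MetricSpace X] (s : Set X) : Prop :=
  ∃ x y : X, IsGeodesicFromTo s x y

/-- A metric space is geodesic if any two points are joined by a geodesic segment. -/
def GeodesicSpace (X : Type*) [MetricSpace X] : Prop :=
  ∀ x y : X, ∃ s : Set X, IsGeodesicFromTo s x y

/-- Closest point projection of a point to a subset:
`π_Y(x) = {y ∈ closure Y | d(x,y) = d(x,Y)}`. -/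
def projSet {X : Type*} [MetricSpace X] (Y : Set X) (x : X) : Set X :=
  {y ∈ closure Y | dist x y = Metric.infDist x Y}

/-- Closest point projection of a subset `B`: `π_Y(B) = ⋃_{x ∈ B} π_Y(x)`. -/
def projSetOf {X : Type*} [MetricSpace X] (Y B : Set X) : Set X :=
  ⋃ x ∈ B, projSet Y x

/-- The closed `r`-neighbourhood `N_r(A) = {x | d(x,A) ≤ r}`. -/
def ptNbhd {X : Type*} [MetricSpace X] (r : ℝ) (A : Set X) : Set X :=
  {x | Metric.infDist x A ≤ r}

/-- `Y` is `C`-contracting : for every geodesic segment `s` with `d(s,Y) ≥ C`,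
one has `diam (π_Y(s)) ≤ C`. -/
def IsContractingWith {X : Type*} [MetricSpace X] (C : ℝ) (Y : Set X) : Prop :=
  ∀ s : Set X, IsGeodesicSegment s → (∀ x ∈ s, C ≤ Metric.infDist x Y) →
    ∀ p ∈ projSetOf Y s, ∀ q ∈ projSetOf Y s, dist p q ≤ C

/-- `Y` is contracting if it is `C`-contracting for some `C ≥ 0`. -/
def IsContractingSet {X : Type*} [MetricSpace X] (Y : Set X) : Prop :=
  ∃ C : ℝ, 0 ≤ C ∧ IsContractingWith C Y

/-- `Y` and `Z` have `R`-bounded intersection for some gauge function `R`: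
`diam (N_r(Y) ∩ N_r(Z)) ≤ R r` for all `r ≥ 0`. -/
def HasBoundedIntersection {X : Type*} [MetricSpace X] (Y Z : Set X) : Prop :=
  ∃ R : ℝ → ℝ, ∀ r : ℝ, 0 ≤ r →
    ∀ p ∈ ptNbhd r Y ∩ ptNbhd r Z, ∀ q ∈ ptNbhd r Y ∩ ptNbhd r Z, dist p q ≤ R r

/-- The orbit `⟨g⟩ · o` of the basepoint under the cyclic subgroup generated by `g`. -/
def cyclicOrbit {G X : Type*} [Group G] [MetricSpace X] [MulAction G X] (g : G) (o : X) :
    Set X :=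
  Set.range fun n : ℤ => (g ^ n) • o

/-- `g` is a contracting element for the action: the orbit `⟨g⟩ · o` is a contracting
subset and `n ↦ gⁿ • o` is a quasi-isometric embedding of `ℤ`. -/
def IsContractingElement {G X : Type*} [Group G] [MetricSpace X] [MulAction G X]
    (o : X) (g : G) : Prop :=
  IsContractingSet (cyclicOrbit g o) ∧
    ∃ K c : ℝ, 1 ≤ K ∧ 0 ≤ c ∧ ∀ m n : ℤ,
      |(m : ℝ) - (n : ℝ)| / K - c ≤ dist ((g ^ m) • o) ((g ^ n) • o) ∧
      dist ((g ^ m) • o) ((g ^ n) • o) ≤ K * |(m : ℝ) - (n : ℝ)| + c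

/-- Two elements are weakly independent if their cyclic orbits have bounded intersection. -/
def WeaklyIndependent {G X : Type*} [Group G] [MetricSpace X] [MulAction G X]
    (o : X) (g h : G) : Prop :=
  HasBoundedIntersection (cyclicOrbit g o) (cyclicOrbit h o)

/-- The action of `G` on `X` has the contracting property: there exist two weakly
independent contracting elements. -/
def ContractingProperty (G : Type*) (X : Type*) [Group G] [MetricSpace X] [MulAction G X]
    (o : X) : Prop :=
  ∃ g h : G, IsContractingElement o g ∧ IsContractingElement o h ∧ WeaklyIndependent o g h

/-- Stable translation length `ℓ_d(g) = lim_n d(o, gⁿ • o)/n`; by subadditivity (Fekete's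
lemma) the limit exists and equals the infimum below. -/
noncomputable def stableLength {G X : Type*} [Group G] [MetricSpace X] [MulAction G X]
    (o : X) (g : G) : ℝ :=
  ⨅ n : ℕ+, dist o ((g ^ (n : ℕ)) • o) / ((n : ℕ) : ℝ)


lemma projSet_nonempty {X : Type*} [MetricSpace X] [ProperSpace X] {Y : Set X}
    (hY : Y.Nonempty) (x : X) : (projSet Y x).Nonempty := by
  obtain ⟨y, hy, hyd⟩ := isClosed_closure.exists_infDist_eq_dist hY.closure x
  exact ⟨y, hy, by rw [← Metric.infDist_closure]; exact hyd.symm⟩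

lemma discrete_ivt (Δ : ℝ) (hΔ : 0 ≤ Δ) (i : ℕ → ℤ) :
    ∀ N : ℕ, (∀ j, j < N → |(i (j+1) : ℝ) - i j| ≤ Δ) →
    ∀ k : ℤ, min (i 0) (i N) ≤ k → k ≤ max (i 0) (i N) →
    ∃ j, j ≤ N ∧ |(i j : ℝ) - k| ≤ Δ := by
  intro N
  induction N with
  | zero =>
    intro _ k h1 h2
    have hk : k = i 0 := le_antisymm (by simpa using h2) (by simpa using h1)
    exact ⟨0, le_refl _, by simp [hk, hΔ]⟩
  | succ N ih =>
    intro hstep k h1 h2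
    by_cases hin : min (i 0) (i N) ≤ k ∧ k ≤ max (i 0) (i N)
    · obtain ⟨j, hj, hb⟩ := ih (fun j hj => hstep j (hj.trans (Nat.lt_succ_self N))) k hin.1 hin.2
      exact ⟨j, hj.trans (Nat.le_succ N), hb⟩
    · have hsN := hstep N (Nat.lt_succ_self N)
      have habs1 := le_abs_self ((i (N+1) : ℝ) - i N)
      have habs2 := neg_abs_le ((i (N+1) : ℝ) - i N)
      rw [not_and_or] at hin
      rcases hin with hin | hin <;> push_neg at hin
      · have hk0 : k < i 0 := lt_of_lt_of_le hin (min_le_left _ _)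
        have hkN : k < i N := lt_of_lt_of_le hin (min_le_right _ _)
        have h1' : i (N+1) ≤ k := by
          rcases le_total (i 0) (i (N+1)) with h | h
          · exact absurd (min_eq_left h ▸ h1) (not_le.2 hk0)
          · exact min_eq_right h ▸ h1
        refine ⟨N+1, le_refl _, ?_⟩
        have c1 : (i (N+1) : ℝ) ≤ k := by exact_mod_cast h1'
        have c2 : (k : ℝ) < i N := by exact_mod_cast hkN
        rw [abs_le]
        constructor <;> linarith
      · have hk0 : i 0 < k := lt_of_le_of_lt (le_max_left _ _) hin
        have hkN : i N < k := lt_of_le_of_lt (le_max_right _ _) hin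
        have h2' : k ≤ i (N+1) := by
          rcases le_total (i (N+1)) (i 0) with h | h
          · exact absurd (lt_of_lt_of_le hk0 (max_eq_left h ▸ h2)) (lt_irrefl _)
          · exact max_eq_right h ▸ h2
        refine ⟨N+1, le_refl _, ?_⟩
        have c1 : (k : ℝ) ≤ i (N+1) := by exact_mod_cast h2'
        have c2 : (i N : ℝ) < k := by exact_mod_cast hkN
        rw [abs_le]
        constructor <;> linarith

lemma geodesic_near_contracting {X : Type*} [MetricSpace X] [ProperSpace X] {Y : Set X}
    (hY : Y.Nonempty) {C r : ℝ} (hC : 0 ≤ C) (hcon : IsContractingWith C Y)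
    {s : Set X} {p q : X} (hs : IsGeodesicFromTo s p q)
    (hp : Metric.infDist p Y ≤ r) (hq : Metric.infDist q Y ≤ r) :
    ∀ x ∈ s, Metric.infDist x Y ≤ 3 * max C r + C := by
  obtain ⟨γ, hγd, hγ0, hγT, him⟩ := hs
  set T := dist p q with hT
  set C' := max C r with hC'
  have hC'0 : 0 ≤ C' := le_trans hC (le_max_left _ _)
  have hCC' : C ≤ C' := le_max_left _ _
  have hrC' : r ≤ C' := le_max_right _ _
  intro x hx
  rw [him] at hx
  obtain ⟨t₀, ht₀, rfl⟩ := hx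
  by_cases hft : Metric.infDist (γ t₀) Y ≤ C'
  · linarith
  push_neg at hft
  have hT0 : (0:ℝ) ≤ T := dist_nonneg
  have hflip : ∀ u ∈ Set.Icc (0:ℝ) T, ∀ v ∈ Set.Icc (0:ℝ) T,
      Metric.infDist (γ u) Y ≤ Metric.infDist (γ v) Y + |u - v| := by
    intro u hu v hv
    calc Metric.infDist (γ u) Y ≤ Metric.infDist (γ v) Y + dist (γ u) (γ v) :=
        Metric.infDist_le_infDist_add_dist
    _ = Metric.infDist (γ v) Y + |u - v| := by rw [hγd u hu v hv]
  set A := {t ∈ Set.Icc (0:ℝ) t₀ | Metric.infDist (γ t) Y ≤ C'} with hA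
  have h0A : (0:ℝ) ∈ A := ⟨⟨le_refl 0, ht₀.1⟩, by rw [hγ0]; exact hp.trans hrC'⟩
  have hAbdd : BddAbove A := ⟨t₀, fun t ht => ht.1.2⟩
  set a := sSup A with ha
  have ha0 : 0 ≤ a := le_csSup hAbdd h0A
  have hat₀ : a ≤ t₀ := csSup_le ⟨0, h0A⟩ (fun t ht => ht.1.2)
  have haI : a ∈ Set.Icc (0:ℝ) T := ⟨ha0, hat₀.trans ht₀.2⟩
  have hfa_le : Metric.infDist (γ a) Y ≤ C' := by
    refine le_of_forall_pos_le_add (fun ε hε => ?_)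
    obtain ⟨t, htA, hta⟩ := exists_lt_of_lt_csSup ⟨0, h0A⟩ (show a - ε < a by linarith)
    have htle : t ≤ a := le_csSup hAbdd htA
    have htI : t ∈ Set.Icc (0:ℝ) T := ⟨htA.1.1, htA.1.2.trans ht₀.2⟩
    have := hflip a haI t htI
    rw [abs_of_nonneg (by linarith)] at this
    have := htA.2
    linarith
  have ha_lt : a < t₀ :=
    lt_of_le_of_ne hat₀ (fun h => absurd (h ▸ hfa_le) (not_le.2 hft))
  have hgtA : ∀ t, a < t → t ≤ t₀ → C' < Metric.infDist (γ t) Y := by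
    intro t h1 h2
    by_contra hle
    push_neg at hle
    exact absurd (le_csSup hAbdd ⟨⟨(ha0.trans h1.le), h2⟩, hle⟩) (not_le.2 h1)
  have hfa_ge : C' ≤ Metric.infDist (γ a) Y := by
    refine le_of_forall_pos_le_add (fun ε hε => ?_)
    set t := min (a + ε) t₀ with htdef
    have h1 : a < t := lt_min (by linarith) ha_lt
    have h2 : t ≤ t₀ := min_le_right _ _
    have htI : t ∈ Set.Icc (0:ℝ) T := ⟨ha0.trans h1.le, h2.trans ht₀.2⟩
    have hlt := hgtA t h1 h2
    have := hflip t htI a haI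
    rw [abs_of_nonneg (by linarith)] at this
    have htu : t ≤ a + ε := min_le_left _ _
    linarith
  set B := {t ∈ Set.Icc t₀ T | Metric.infDist (γ t) Y ≤ C'} with hB
  have hTB : T ∈ B := ⟨⟨ht₀.2, le_refl T⟩, by rw [hγT]; exact hq.trans hrC'⟩
  have hBbdd : BddBelow B := ⟨t₀, fun t ht => ht.1.1⟩
  set b := sInf B with hb
  have ht₀b : t₀ ≤ b := le_csInf ⟨T, hTB⟩ (fun t ht => ht.1.1)
  have hbT : b ≤ T := csInf_le hBbdd hTB
  have hbI : b ∈ Set.Icc (0:ℝ) T := ⟨ht₀.1.trans ht₀b, hbT⟩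
  have hfb_le : Metric.infDist (γ b) Y ≤ C' := by
    refine le_of_forall_pos_le_add (fun ε hε => ?_)
    obtain ⟨t, htB', htb⟩ := exists_lt_of_csInf_lt ⟨T, hTB⟩ (show b < b + ε by linarith)
    have htge : b ≤ t := csInf_le hBbdd htB'
    have htI : t ∈ Set.Icc (0:ℝ) T := ⟨ht₀.1.trans htB'.1.1, htB'.1.2⟩
    have := hflip b hbI t htI
    rw [abs_of_nonpos (by linarith), neg_sub] at this
    have := htB'.2
    linarith
  have hb_gt : t₀ < b :=
    lt_of_le_of_ne ht₀b (fun h => absurd (h ▸ hfb_le) (not_le.2 hft))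
  have hgtB : ∀ t, t₀ ≤ t → t < b → C' < Metric.infDist (γ t) Y := by
    intro t h1 h2
    by_contra hle
    push_neg at hle
    exact absurd (csInf_le hBbdd ⟨⟨h1, (le_of_lt h2).trans hbT⟩, hle⟩) (not_le.2 h2)
  have hfb_ge : C' ≤ Metric.infDist (γ b) Y := by
    refine le_of_forall_pos_le_add (fun ε hε => ?_)
    set t := max (b - ε) t₀ with htdef
    have h1 : t < b := max_lt (by linarith) hb_gt
    have h2 : t₀ ≤ t := le_max_right _ _
    have htI : t ∈ Set.Icc (0:ℝ) T := ⟨ht₀.1.trans h2, h1.le.trans hbT⟩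
    have hlt := hgtB t h2 h1
    have := hflip t htI b hbI
    rw [abs_of_nonpos (by linarith), neg_sub] at this
    have htu : b - ε ≤ t := le_max_left _ _
    linarith
  have hab : a < b := ha_lt.trans hb_gt
  have hdab : dist (γ a) (γ b) = b - a := by
    rw [hγd a haI b hbI, abs_of_nonpos (by linarith), neg_sub]
  have hgeod' : IsGeodesicFromTo (γ '' Set.Icc a b) (γ a) (γ b) := by
    refine ⟨fun u => γ (a + u), ?_, by simp, ?_, ?_⟩
    · intro u hu v hv
      rw [hdab] at hu hv
      have hau : a + u ∈ Set.Icc (0:ℝ) T := ⟨by linarith [hu.1, ha0], by linarith [hu.2, hbT]⟩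
      have hav : a + v ∈ Set.Icc (0:ℝ) T := ⟨by linarith [hv.1, ha0], by linarith [hv.2, hbT]⟩
      rw [hγd _ hau _ hav]
      ring_nf
    · rw [hdab]
      show γ (a + (b - a)) = γ b
      congr 1
      ring
    · rw [hdab]
      have himg : (fun u => a + u) '' Set.Icc (0:ℝ) (b - a) = Set.Icc a b := by
        rw [Set.image_const_add_Icc]
        norm_num
      rw [show (fun u => γ (a + u)) '' Set.Icc (0:ℝ) (b-a)
            = γ '' ((fun u => a + u) '' Set.Icc (0:ℝ) (b-a)) from (Set.image_image _ _ _).symm,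
         himg]
  have hfC : ∀ x ∈ γ '' Set.Icc a b, C ≤ Metric.infDist x Y := by
    rintro x ⟨t, ht, rfl⟩
    rcases le_or_gt t t₀ with h | h
    · rcases eq_or_lt_of_le ht.1 with h' | h'
      · exact h' ▸ (hCC'.trans hfa_ge)
      · exact hCC'.trans (hgtA t h' h).le
    · rcases eq_or_lt_of_le ht.2 with h' | h'
      · exact h' ▸ (hCC'.trans hfb_ge)
      · exact hCC'.trans (hgtB t h.le h').le
  obtain ⟨p1, hp1⟩ := projSet_nonempty hY (γ a)
  obtain ⟨p2, hp2⟩ := projSet_nonempty hY (γ b)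
  have hp1' : p1 ∈ projSetOf Y (γ '' Set.Icc a b) :=
    Set.mem_iUnion₂.2 ⟨γ a, ⟨a, ⟨le_refl a, hab.le⟩, rfl⟩, hp1⟩
  have hp2' : p2 ∈ projSetOf Y (γ '' Set.Icc a b) :=
    Set.mem_iUnion₂.2 ⟨γ b, ⟨b, ⟨hab.le, le_refl b⟩, rfl⟩, hp2⟩
  have hd12 : dist p1 p2 ≤ C := hcon _ ⟨γ a, γ b, hgeod'⟩ hfC p1 hp1' p2 hp2'
  have hfa : Metric.infDist (γ a) Y = C' := le_antisymm hfa_le hfa_ge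
  have hfb : Metric.infDist (γ b) Y = C' := le_antisymm hfb_le hfb_ge
  have hba : b - a ≤ 2 * C' + C := by
    have h4 : dist (γ a) (γ b) ≤ dist (γ a) p1 + dist p1 p2 + dist p2 (γ b) :=
      dist_triangle4 _ _ _ _
    rw [hdab, hp1.2, hfa] at h4
    have : dist p2 (γ b) = C' := by rw [dist_comm, hp2.2, hfb]
    linarith
  have hfinal := hflip t₀ ht₀ a haI
  rw [abs_of_nonneg (by linarith), hfa] at hfinal
  linarith

set_option maxHeartbeats 1000000 in
lemma core_of_not_wi {G X : Type*} [Group G] [MetricSpace X] [ProperSpace X] [MulAction G X]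
    (hgeo : GeodesicSpace X) (o : X) (g h : G)
    (hg : IsContractingElement o g) (hh : IsContractingElement o h)
    (hnwi : ¬ WeaklyIndependent o g h) :
    ∃ s : ℝ, ∃ ε : ℤ, (ε = 1 ∨ ε = -1) ∧ ∀ L : ℝ, ∃ b : ℤ, L ≤ (b : ℝ) ∧
      ∀ k : ℤ, 0 ≤ k → k ≤ b →
        Metric.infDist ((g ^ (ε * k)) • o) (cyclicOrbit h o) ≤ s := by
  obtain ⟨⟨Cg, hCg0, hCg⟩, Kg, cg, hK1, hc0, hqi⟩ := hg
  obtain ⟨⟨Ch, hCh0, hCh⟩, -⟩ := hh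
  have hKg0 : (0:ℝ) < Kg := lt_of_lt_of_le one_pos hK1
  set Yg := cyclicOrbit g o with hYgdef
  set Yh := cyclicOrbit h o with hYhdef
  have hoYg : o ∈ Yg := ⟨0, by simp⟩
  have hoYh : o ∈ Yh := ⟨0, by simp⟩
  have hYgne : Yg.Nonempty := ⟨o, hoYg⟩
  have hYhne : Yh.Nonempty := ⟨o, hoYh⟩
  have hidx : ∀ m n : ℤ, ∀ D : ℝ, dist ((g ^ m) • o) ((g ^ n) • o) ≤ D →
      |(m:ℝ) - (n:ℝ)| ≤ Kg * (D + cg) := by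
    intro m n D hD
    have h1 := (hqi m n).1
    have h2 : |(m:ℝ) - (n:ℝ)| / Kg ≤ D + cg := by linarith
    calc |(m:ℝ) - (n:ℝ)| = Kg * (|(m:ℝ) - (n:ℝ)| / Kg) := by field_simp
    _ ≤ Kg * (D + cg) := mul_le_mul_of_nonneg_left h2 hKg0.le
  have hex : ∃ r₀ : ℝ, 0 ≤ r₀ ∧ ∀ B : ℝ,
      ∃ u ∈ ptNbhd r₀ Yg ∩ ptNbhd r₀ Yh, ∃ v ∈ ptNbhd r₀ Yg ∩ ptNbhd r₀ Yh,
        B < dist u v := by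
    by_contra hco
    push_neg at hco
    refine hnwi ⟨fun r => if hr : 0 ≤ r then (hco r hr).choose else 0,
      fun r hr u hu v hv => ?_⟩
    simp only [dif_pos hr]
    exact (hco r hr).choose_spec u hu v hv
  obtain ⟨r₀, hr₀0, hr₀⟩ := hex
  have hmY : 0 ≤ max Cg r₀ := le_trans hCg0 (le_max_left _ _)
  have hmZ : 0 ≤ max Ch r₀ := le_trans hCh0 (le_max_left _ _)
  set DY := 3 * max Cg r₀ + Cg with hDYdef
  set DZ := 3 * max Ch r₀ + Ch with hDZdef
  have hDY0 : 0 ≤ DY := by simp only [hDYdef]; linarith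
  have hDZ0 : 0 ≤ DZ := by simp only [hDZdef]; linarith
  set Δ₀ := Kg * (2*DY + 3 + cg) with hΔ₀def
  set Δ₁ := Kg * (DY + 1 + cg) with hΔ₁def
  set Δ₂ := Kg * (DY + r₀ + 2 + cg) with hΔ₂def
  set Δ' := max Δ₀ (max Δ₁ Δ₂) with hΔ'def
  have hΔ₀0 : 0 ≤ Δ₀ := mul_nonneg hKg0.le (by linarith)
  have hΔ'0 : 0 ≤ Δ' := le_trans hΔ₀0 (le_max_left _ _)
  set sbound := Kg * (Δ' + cg) + DY + 1 + DZ with hsbdef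
  have hcore : ∀ L : ℝ, ∃ b : ℤ, L ≤ |(b:ℝ)| ∧ ∀ k : ℤ, min b 0 ≤ k → k ≤ max b 0 →
      Metric.infDist ((g ^ k) • o) Yh ≤ sbound := by
    intro L
    set Lm := max L 0 with hLmdef
    set T₀ := Kg * Lm + cg + r₀ + 2 with hT₀def
    obtain ⟨u, hu, v, hv, huv⟩ := hr₀ (2 * T₀)
    have hqex : ∃ q ∈ ptNbhd r₀ Yg ∩ ptNbhd r₀ Yh, T₀ < dist o q := by
      by_contra hc
      push_neg at hc
      have h1 := hc u hu
      have h2 := hc v hv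
      have h3 := dist_triangle u o v
      rw [dist_comm u o] at h3
      linarith
    obtain ⟨q, hqS, hqd⟩ := hqex
    obtain ⟨sge, γ, hγd, hγ0, hγT, him⟩ := hgeo o q
    set T := dist o q with hTdef
    have hT0 : (0:ℝ) ≤ T := dist_nonneg
    have hqYg : Metric.infDist q Yg ≤ r₀ := hqS.1
    have hqYh : Metric.infDist q Yh ≤ r₀ := hqS.2
    have hoYg0 : Metric.infDist o Yg ≤ r₀ := by
      rw [Metric.infDist_zero_of_mem hoYg]; exact hr₀0
    have hoYh0 : Metric.infDist o Yh ≤ r₀ := by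
      rw [Metric.infDist_zero_of_mem hoYh]; exact hr₀0
    have hnearY : ∀ x ∈ sge, Metric.infDist x Yg ≤ DY :=
      geodesic_near_contracting hYgne hCg0 hCg ⟨γ, hγd, hγ0, hγT, him⟩ hoYg0 hqYg
    have hnearZ : ∀ x ∈ sge, Metric.infDist x Yh ≤ DZ :=
      geodesic_near_contracting hYhne hCh0 hCh ⟨γ, hγd, hγ0, hγT, him⟩ hoYh0 hqYh
    obtain ⟨y, hyY, hyd⟩ := (Metric.infDist_lt_iff hYgne).1
      (lt_of_le_of_lt hqYg (lt_add_one r₀))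
    obtain ⟨b, rfl⟩ := hyY
    set N := ⌈T⌉₊ with hNdef
    have hch : ∀ j : ℕ, ∃ ii : ℤ, dist (γ (min (j:ℝ) T)) ((g ^ ii) • o) < DY + 1 := by
      intro j
      have hmem : γ (min (j:ℝ) T) ∈ sge := by
        rw [him]
        exact ⟨_, ⟨le_min (Nat.cast_nonneg j) hT0, min_le_right _ _⟩, rfl⟩
      have hlt : Metric.infDist (γ (min (j:ℝ) T)) Yg < DY + 1 :=
        lt_of_le_of_lt (hnearY _ hmem) (by linarith)
      obtain ⟨y, hyY, hyd'⟩ := (Metric.infDist_lt_iff hYgne).1 hlt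
      obtain ⟨ii, rfl⟩ := hyY
      exact ⟨ii, hyd'⟩
    choose i hi using hch
    have hstep : ∀ j, j < N → |(i (j+1) : ℝ) - i j| ≤ Δ₀ := by
      intro j _
      have ht2 : min (j:ℝ) T ≤ min ((j:ℝ)+1) T := min_le_min (by linarith) le_rfl
      have ht1 : min ((j:ℝ)+1) T ≤ min (j:ℝ) T + 1 := by
        rcases le_total ((j:ℝ)) T with hjT | hjT
        · rw [min_eq_left hjT]
          exact (min_le_left _ _)
        · rw [min_eq_right hjT, min_eq_right (by linarith)]
          linarith
      have hI1 : min ((j:ℝ)+1) T ∈ Set.Icc (0:ℝ) T :=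
        ⟨le_min (by positivity) hT0, min_le_right _ _⟩
      have hI0 : min (j:ℝ) T ∈ Set.Icc (0:ℝ) T :=
        ⟨le_min (Nat.cast_nonneg j) hT0, min_le_right _ _⟩
      have hdγ : dist (γ (min ((j:ℝ)+1) T)) (γ (min (j:ℝ) T)) ≤ 1 := by
        rw [hγd _ hI1 _ hI0, abs_of_nonneg (by linarith)]
        linarith
      have hcast : ((j+1 : ℕ):ℝ) = (j:ℝ) + 1 := by push_cast; ring
      have h1 := hi (j+1)
      rw [hcast] at h1
      have hd : dist ((g ^ (i (j+1))) • o) ((g ^ (i j)) • o) ≤ 2*DY + 3 := by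
        calc dist ((g ^ (i (j+1))) • o) ((g ^ (i j)) • o)
            ≤ dist ((g ^ (i (j+1))) • o) (γ (min ((j:ℝ)+1) T))
              + dist (γ (min ((j:ℝ)+1) T)) (γ (min (j:ℝ) T))
              + dist (γ (min (j:ℝ) T)) ((g ^ (i j)) • o) := dist_triangle4 _ _ _ _
        _ ≤ (DY+1) + 1 + (DY+1) := by
              refine add_le_add (add_le_add ?_ hdγ) (hi j).le
              rw [dist_comm]
              exact h1.le
        _ = 2*DY + 3 := by ring
      exact hidx _ _ _ hd
    have h0b : |(i 0 : ℝ)| ≤ Δ₁ := by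
      have h1 := hi 0
      rw [Nat.cast_zero, min_eq_left hT0, hγ0] at h1
      have hd : dist ((g ^ (i 0)) • o) ((g ^ (0:ℤ)) • o) ≤ DY + 1 := by
        rw [zpow_zero, one_smul, dist_comm]
        exact h1.le
      have := hidx (i 0) 0 _ hd
      simpa using this
    have hTN : min ((N:ℝ)) T = T := min_eq_right (Nat.le_ceil T)
    have hNb : |(i N : ℝ) - (b:ℝ)| ≤ Δ₂ := by
      have h1 := hi N
      rw [hTN, hγT] at h1
      have hd : dist ((g ^ (i N)) • o) ((g ^ b) • o) ≤ DY + r₀ + 2 := by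
        calc dist ((g ^ (i N)) • o) ((g ^ b) • o)
            ≤ dist ((g ^ (i N)) • o) q + dist q ((g ^ b) • o) := dist_triangle _ _ _
        _ ≤ (DY+1) + (r₀+1) := add_le_add (by rw [dist_comm]; exact h1.le) hyd.le
        _ = DY + r₀ + 2 := by ring
      exact hidx (i N) b _ hd
    have hbbig : L ≤ |(b:ℝ)| := by
      have htri := dist_triangle o ((g^b)•o) q
      rw [dist_comm ((g^b)•o) q] at htri
      have hdob : Kg * Lm + cg + 1 ≤ dist o ((g^b)•o) := by linarith
      have hup := (hqi b 0).2
      rw [zpow_zero, one_smul, dist_comm] at hup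
      simp only [Int.cast_zero, sub_zero] at hup
      have hLmb : Lm ≤ |(b:ℝ)| := by
        by_contra hcl
        push_neg at hcl
        have := mul_lt_mul_of_pos_left hcl hKg0
        linarith
      exact le_trans (le_max_left L 0) hLmb
    refine ⟨b, hbbig, ?_⟩
    intro k hk1 hk2
    have hj : ∃ j, j ≤ N ∧ |(i j : ℝ) - k| ≤ Δ' := by
      by_cases hin : min (i 0) (i N) ≤ k ∧ k ≤ max (i 0) (i N)
      · obtain ⟨j, hjN, hjb⟩ := discrete_ivt Δ₀ hΔ₀0 i N hstep k hin.1 hin.2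
        exact ⟨j, hjN, hjb.trans (le_max_left _ _)⟩
      · have hΔ₁' : Δ₁ ≤ Δ' := (le_max_left Δ₁ Δ₂).trans (le_max_right Δ₀ _)
        have hΔ₂' : Δ₂ ≤ Δ' := (le_max_right Δ₁ Δ₂).trans (le_max_right Δ₀ _)
        rw [not_and_or] at hin
        rcases hin with hin | hin <;> push_neg at hin
        · have hk0 : k < i 0 := lt_of_lt_of_le hin (min_le_left _ _)
          have hkN : k < i N := lt_of_lt_of_le hin (min_le_right _ _)
          rcases le_or_gt 0 k with hpos | hneg
          · refine ⟨0, Nat.zero_le _, ?_⟩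
            have c0 : (0:ℝ) ≤ (k:ℝ) := by exact_mod_cast hpos
            have ck0 : (k:ℝ) < (i 0:ℝ) := by exact_mod_cast hk0
            rw [abs_of_nonneg (by linarith)]
            have := le_abs_self ((i 0:ℝ))
            linarith
          · have hbk : b ≤ k := by
              rcases le_total b 0 with hb0 | hb0
              · rw [min_eq_left hb0] at hk1
                exact hk1
              · rw [min_eq_right hb0] at hk1
                exact absurd (hk1.trans_lt hneg) (lt_irrefl 0)
            refine ⟨N, le_refl _, ?_⟩
            have cbk : (b:ℝ) ≤ (k:ℝ) := by exact_mod_cast hbk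
            have ckN : (k:ℝ) < (i N:ℝ) := by exact_mod_cast hkN
            rw [abs_of_nonneg (by linarith)]
            have := le_abs_self ((i N:ℝ) - b)
            linarith
        · have hk0 : i 0 < k := lt_of_le_of_lt (le_max_left _ _) hin
          have hkN : i N < k := lt_of_le_of_lt (le_max_right _ _) hin
          rcases le_or_gt k 0 with hneg | hpos
          · refine ⟨0, Nat.zero_le _, ?_⟩
            have c0 : (k:ℝ) ≤ 0 := by exact_mod_cast hneg
            have ck0 : (i 0:ℝ) < (k:ℝ) := by exact_mod_cast hk0
            rw [abs_of_nonpos (by linarith)]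
            have := neg_abs_le ((i 0:ℝ))
            linarith
          · have hbk : k ≤ b := by
              rcases le_total b 0 with hb0 | hb0
              · rw [max_eq_right hb0] at hk2
                exact absurd (hpos.trans_le hk2) (lt_irrefl 0)
              · rw [max_eq_left hb0] at hk2
                exact hk2
            refine ⟨N, le_refl _, ?_⟩
            have cbk : (k:ℝ) ≤ (b:ℝ) := by exact_mod_cast hbk
            have ckN : (i N:ℝ) < (k:ℝ) := by exact_mod_cast hkN
            rw [abs_of_nonpos (by linarith)]
            have := neg_abs_le ((i N:ℝ) - b)
            linarith
    obtain ⟨j, hjN, hjΔ⟩ := hj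
    have habs : |(k:ℝ) - (i j:ℝ)| ≤ Δ' := by
      rw [abs_sub_comm]
      exact hjΔ
    have hq1 : dist ((g ^ k) • o) ((g ^ (i j)) • o) ≤ Kg * Δ' + cg := by
      have hup := (hqi k (i j)).2
      have := mul_le_mul_of_nonneg_left habs hKg0.le
      linarith
    have hmemj : γ (min (j:ℝ) T) ∈ sge := by
      rw [him]
      exact ⟨_, ⟨le_min (Nat.cast_nonneg j) hT0, min_le_right _ _⟩, rfl⟩
    have hZ : Metric.infDist (γ (min (j:ℝ) T)) Yh ≤ DZ := hnearZ _ hmemj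
    have hdd : dist ((g^k)•o) (γ (min (j:ℝ) T)) ≤ (Kg * Δ' + cg) + (DY + 1) := by
      calc dist ((g^k)•o) (γ (min (j:ℝ) T))
          ≤ dist ((g^k)•o) ((g^(i j))•o) + dist ((g^(i j))•o) (γ (min (j:ℝ) T)) :=
            dist_triangle _ _ _
      _ ≤ (Kg*Δ'+cg) + (DY+1) := add_le_add hq1 (by rw [dist_comm]; exact (hi j).le)
    have hinf : Metric.infDist ((g^k)•o) Yh
        ≤ Metric.infDist (γ (min (j:ℝ) T)) Yh + dist ((g^k)•o) (γ (min (j:ℝ) T)) :=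
      Metric.infDist_le_infDist_add_dist
    have hcg : cg ≤ Kg * cg := le_mul_of_one_le_left hc0 hK1
    have hexp : Kg * (Δ' + cg) = Kg * Δ' + Kg * cg := by ring
    simp only [hsbdef]
    linarith
  refine ⟨sbound, ?_⟩
  by_contra hno
  push_neg at hno
  obtain ⟨L₁, hL₁⟩ := hno 1 (Or.inl rfl)
  obtain ⟨L₂, hL₂⟩ := hno (-1) (Or.inr rfl)
  obtain ⟨b, hbL, hbk⟩ := hcore (max (max L₁ L₂) 0 + 1)
  rcases le_or_gt 0 b with hb0 | hb0
  · have hbcast : |(b:ℝ)| = (b:ℝ) := abs_of_nonneg (by exact_mod_cast hb0)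
    rw [hbcast] at hbL
    obtain ⟨k, hk0, hkb, hkgt⟩ := hL₁ b
      (by linarith [le_max_left L₁ L₂, le_max_left (max L₁ L₂) (0:ℝ)])
    have hin := hbk k (by rw [min_eq_right hb0]; exact hk0)
      (by rw [max_eq_left hb0]; exact hkb)
    rw [one_mul] at hkgt
    exact absurd hin (not_le.2 hkgt)
  · have hbneg : (b:ℝ) < 0 := by exact_mod_cast hb0
    have hbcast : |(b:ℝ)| = -(b:ℝ) := abs_of_neg hbneg
    rw [hbcast] at hbL
    obtain ⟨k, hk0, hkb, hkgt⟩ := hL₂ (-b)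
      (by push_cast; linarith [le_max_right L₁ L₂, le_max_left (max L₁ L₂) (0:ℝ)])
    have hin := hbk (-k) (by rw [min_eq_left hb0.le]; omega)
      (by rw [max_eq_right hb0.le]; omega)
    rw [neg_one_mul] at hkgt
    exact absurd hin (not_le.2 hkgt)

lemma wi_contra {G X : Type*} [Group G] [MetricSpace X] [MulAction G X] (o : X) (g ha hb : G)
    (Kg cg : ℝ) (hK1 : 1 ≤ Kg) (hc0 : 0 ≤ cg)
    (hlow : ∀ m n : ℤ, |(m:ℝ) - (n:ℝ)| / Kg - cg ≤ dist ((g ^ m) • o) ((g ^ n) • o))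
    (ε : ℤ) (hε : ε = 1 ∨ ε = -1) (s₁ s₂ : ℝ)
    (hside₁ : ∀ L : ℝ, ∃ b : ℤ, L ≤ (b:ℝ) ∧ ∀ k : ℤ, 0 ≤ k → k ≤ b →
        Metric.infDist ((g ^ (ε * k)) • o) (cyclicOrbit ha o) ≤ s₁)
    (hside₂ : ∀ L : ℝ, ∃ b : ℤ, L ≤ (b:ℝ) ∧ ∀ k : ℤ, 0 ≤ k → k ≤ b →
        Metric.infDist ((g ^ (ε * k)) • o) (cyclicOrbit hb o) ≤ s₂)
    (hw : WeaklyIndependent o ha hb) : False := by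
  have hKg0 : (0:ℝ) < Kg := lt_of_lt_of_le one_pos hK1
  obtain ⟨R, hR⟩ := hw
  set r := max (max s₁ s₂) 0 with hrdef
  have hr0 : (0:ℝ) ≤ r := le_max_right _ _
  set L := Kg * (max (R r) 0 + cg + 1) with hLdef
  have hL1 : 1 ≤ L := by nlinarith [le_max_right (R r) (0:ℝ)]
  obtain ⟨b₁, hb₁, hk₁⟩ := hside₁ L
  obtain ⟨b₂, hb₂, hk₂⟩ := hside₂ L
  set k₀ := min b₁ b₂ with hk₀def
  have hcast : ((k₀:ℤ):ℝ) = min ((b₁:ℤ):ℝ) ((b₂:ℤ):ℝ) := by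
    simp [hk₀def]
  have hLk₀ : L ≤ (k₀:ℝ) := by
    rw [hcast]
    exact le_min hb₁ hb₂
  have hk₀R : (0:ℝ) ≤ (k₀:ℝ) := by linarith
  have h0k₀ : 0 ≤ k₀ := by exact_mod_cast hk₀R
  have hv₁ := hk₁ k₀ h0k₀ (min_le_left _ _)
  have hv₂ := hk₂ k₀ h0k₀ (min_le_right _ _)
  have hoa : Metric.infDist o (cyclicOrbit ha o) ≤ r := by
    rw [Metric.infDist_zero_of_mem (show o ∈ cyclicOrbit ha o from ⟨0, by simp⟩)]
    exact hr0
  have hob : Metric.infDist o (cyclicOrbit hb o) ≤ r := by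
    rw [Metric.infDist_zero_of_mem (show o ∈ cyclicOrbit hb o from ⟨0, by simp⟩)]
    exact hr0
  have hRle := hR r hr0 o ⟨hoa, hob⟩ ((g ^ (ε * k₀)) • o)
    ⟨hv₁.trans ((le_max_left s₁ s₂).trans (le_max_left _ _)),
     hv₂.trans ((le_max_right s₁ s₂).trans (le_max_left _ _))⟩
  have hlow' := hlow (ε * k₀) 0
  rw [zpow_zero, one_smul] at hlow'
  have habs : |((ε * k₀ : ℤ):ℝ) - ((0:ℤ):ℝ)| = (k₀:ℝ) := by
    rcases hε with rfl | rfl <;> push_cast <;>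
      simp [abs_of_nonneg hk₀R]
  rw [habs, dist_comm] at hlow'
  have hfin : (k₀:ℝ)/Kg - cg ≤ R r := hlow'.trans hRle
  have hdiv : max (R r) 0 + cg + 1 ≤ (k₀:ℝ)/Kg := by
    rw [le_div_iff₀ hKg0]
    calc (max (R r) 0 + cg + 1) * Kg = Kg * (max (R r) 0 + cg + 1) := by ring
    _ ≤ (k₀:ℝ) := hLk₀
  have hmax := le_max_left (R r) (0:ℝ)
  linarith

set_option maxHeartbeats 1000000 in
/-- given three pairwise weakly independent contracting elements, every
contracting element is weakly independent with one of them. -/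
theorem weakly_independent_one_in_three {G X : Type*} [Group G]
    [MetricSpace X] [ProperSpace X] [MulAction G X]
    (hiso : ∀ g : G, Isometry fun x : X => g • x)
    (hgeo : GeodesicSpace X) (o : X)
    (h1 h2 h3 : G)
    (hc1 : IsContractingElement o h1) (hc2 : IsContractingElement o h2)
    (hc3 : IsContractingElement o h3)
    (hw12 : WeaklyIndependent o h1 h2) (hw13 : WeaklyIndependent o h1 h3)
    (hw23 : WeaklyIndependent o h2 h3)
    (g : G) (hg : IsContractingElement o g) :
    ∃ h ∈ ({h1, h2, h3} : Set G), WeaklyIndependent o g h := by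
  by_contra hcon
  push_neg at hcon
  have hn1 : ¬ WeaklyIndependent o g h1 := hcon h1 (by simp)
  have hn2 : ¬ WeaklyIndependent o g h2 := hcon h2 (by simp)
  have hn3 : ¬ WeaklyIndependent o g h3 := hcon h3 (by simp)
  obtain ⟨s1, ε1, hε1, hside1⟩ := core_of_not_wi hgeo o g h1 hg hc1 hn1
  obtain ⟨s2, ε2, hε2, hside2⟩ := core_of_not_wi hgeo o g h2 hg hc2 hn2
  obtain ⟨s3, ε3, hε3, hside3⟩ := core_of_not_wi hgeo o g h3 hg hc3 hn3
  obtain ⟨-, Kg, cg, hK1, hc0, hqi⟩ := hg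
  have hlow : ∀ m n : ℤ, |(m:ℝ) - (n:ℝ)| / Kg - cg ≤ dist ((g ^ m) • o) ((g ^ n) • o) :=
    fun m n => (hqi m n).1
  rcases hε1 with rfl | rfl <;> rcases hε2 with rfl | rfl <;> rcases hε3 with rfl | rfl
  · exact (wi_contra o g h1 h2 Kg cg hK1 hc0 hlow 1 (Or.inl rfl) s1 s2 hside1 hside2 hw12).elim
  · exact (wi_contra o g h1 h2 Kg cg hK1 hc0 hlow 1 (Or.inl rfl) s1 s2 hside1 hside2 hw12).elim
  · exact (wi_contra o g h1 h3 Kg cg hK1 hc0 hlow 1 (Or.inl rfl) s1 s3 hside1 hside3 hw13).elim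
  · exact (wi_contra o g h2 h3 Kg cg hK1 hc0 hlow (-1) (Or.inr rfl) s2 s3 hside2 hside3 hw23).elim
  · exact (wi_contra o g h2 h3 Kg cg hK1 hc0 hlow 1 (Or.inl rfl) s2 s3 hside2 hside3 hw23).elim
  · exact (wi_contra o g h1 h3 Kg cg hK1 hc0 hlow (-1) (Or.inr rfl) s1 s3 hside1 hside3 hw13).elim
  · exact (wi_contra o g h1 h2 Kg cg hK1 hc0 hlow (-1) (Or.inr rfl) s1 s2 hside1 hside2 hw12).elim
  · exact (wi_contra o g h1 h2 Kg cg hK1 hc0 hlow (-1) (Or.inr rfl) s1 s2 hside1 hside2 hw12).elim
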